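/- arXiv:2208.02876 — 3 statements merged into one kernel-verified Lean document; each statement's English description precedes it below -/
import Mathlib

section
/- Let q be a prime power, n ≥ 2 and m ≥ 2 integers, β ∈ F_{q^n}^*, and j ∈ {1,...,m}. Let e be a positive divisor of q^n − 1 and let p_1, ..., p_r be all the primes dividing q^n − 1 that do not divide e; set e_1 = ... = e_m = e. Let g ∈ F_q[x] be a monic divisor of x^n − 1 and let h_1, ..., h_s ∈ F_q[x] be all the monic irreducible polynomials dividing x^n − 1 that do not divide g. Then N_j(q^n−1, ..., q^n−1, x^n−1) ≥ Σ_{t=1}^{m} Σ_{i=1}^{r} N_j(e_1, ..., e_{t−1}, p_i·e_t, e_{t+1}, ..., e_m, g) + Σ_{i=1}^{s} N_j(e_1, ..., e_m, h_i·g) − (m·r + s − 1) · N_j(e_1, ..., e_m, g). -/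
open Polynomial

/-- An element of a finite field `E` is primitive if it generates the cyclic group `Eˣ`,
i.e. its multiplicative order is `|E| - 1`. -/
def IsPrimitiveElem {E : Type*} [Field E] [Fintype E] (α : E) : Prop :=
  orderOf α = Fintype.card E - 1

/-- An element `g` of a degree-`n` extension `E` of a finite field `F` is normal over `F`
if `g, g^q, …, g^(q^(n-1))` (with `q = |F|`) is an `F`-basis of `E`. -/
def IsNormalElem (F : Type*) {E : Type*} [Field F] [Field E] [Algebra F E] [Fintype F]
    (n : ℕ) (g : E) : Prop :=
  ∃ b : Module.Basis (Fin n) F E, ∀ i : Fin n, b i = g ^ Fintype.card F ^ (i : ℕ)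

/-- `α` is `e`-free: for every divisor `d ≠ 1` of `e`, `α` is not a `d`-th power in `E`. -/
def IsEFree {E : Type*} [Field E] (e : ℕ) (α : E) : Prop :=
  ∀ d : ℕ, d ∣ e → d ≠ 1 → ¬ ∃ β : E, α = β ^ d

/-- The `F_q[x]`-module action on `E`: `f ∘ α = Σ aᵢ α^(qⁱ)` for `f = Σ aᵢ xⁱ`. -/
def polyAction {F E : Type*} [Field F] [Field E] [Algebra F E] [Fintype F]
    (f : Polynomial F) (α : E) : E :=
  f.sum fun i a => algebraMap F E a * α ^ Fintype.card F ^ i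

/-- `α` is `g`-free: for every monic divisor `h ≠ 1` of `g`, `α` is not of the form
`h ∘ β` for the `F_q[x]`-module action on `E`. -/
def IsGFree {F E : Type*} [Field F] [Field E] [Algebra F E] [Fintype F]
    (g : Polynomial F) (α : E) : Prop :=
  ∀ h : Polynomial F, h.Monic → h ∣ g → h ≠ 1 → ¬ ∃ β : E, α = polyAction h β

/-- `W t` is the number of squarefree positive divisors of `t`. -/
noncomputable def Wnat (t : ℕ) : ℕ := Set.ncard {d : ℕ | Squarefree d ∧ d ∣ t}

/-- `W f` is the number of monic squarefree divisors of `f`. -/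
noncomputable def Wpoly {F : Type*} [Field F] (f : Polynomial F) : ℕ :=
  Set.ncard {h : Polynomial F | h.Monic ∧ Squarefree h ∧ h ∣ f}

/-- `Nj β e g j` counts the `α ∈ E` such that `α + (i-1)β` is `e i`-free for all `i`
and `α + (j-1)β` is `g`-free (indices shifted to start at `0`). -/
noncomputable def Nj {F E : Type*} [Field F] [Field E] [Algebra F E] [Fintype F]
    {m : ℕ} (β : E) (e : Fin m → ℕ) (g : Polynomial F) (j : Fin m) : ℕ :=
  Set.ncard {α : E | (∀ i : Fin m, IsEFree (e i) (α + (i : ℕ) • β)) ∧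
    IsGFree g (α + (j : ℕ) • β)}

/-! Freeness with respect to `N` (resp. `f`) only has to be tested at the primes (resp. monic
irreducibles) dividing it. Hence an `α` counted by `N_j(e, …, e, g)` and by every `N_j` in which one
`e_t` is replaced by `p e_t` or `g` by `h g` is counted by `N_j(q^n - 1, …, x^n - 1)`, and the bound
is the union bound `|A \ ⋂ Sᵢ| ≤ ∑ |A \ Sᵢ|` for subsets `Sᵢ` of `A`. -/

lemma polyAction_eq_aeval_frobenius {F E : Type*} [Field F] [Field E] [Algebra F E] [Fintype F]
    (f : F[X]) (α : E) :
    polyAction f α = aeval (FiniteField.frobeniusAlgHom F E).toLinearMap f α := by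
  rw [aeval_def, eval₂_eq_sum, polyAction, Polynomial.sum_def, Polynomial.sum_def,
    LinearMap.sum_apply]
  refine Finset.sum_congr rfl fun i _ => ?_
  rw [Module.End.mul_apply, Module.algebraMap_end_apply, Module.End.pow_apply,
    AlgHom.coe_toLinearMap, FiniteField.coe_frobeniusAlgHom, pow_iterate, Algebra.smul_def]

lemma polyAction_mul {F E : Type*} [Field F] [Field E] [Algebra F E] [Fintype F]
    (u v : F[X]) (α : E) : polyAction (u * v) α = polyAction u (polyAction v α) := by
  simp only [polyAction_eq_aeval_frobenius, map_mul, Module.End.mul_apply]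

lemma sum_ncard_sub_le_ncard_inter_biInter {α ι : Type*} [Finite α] (s : Finset ι)
    {A : Set α} {S : ι → Set α} (hS : ∀ i ∈ s, S i ⊆ A) :
    ∑ i ∈ s, ((S i).ncard : ℤ) - (s.card - 1) * A.ncard ≤ (A ∩ ⋂ i ∈ s, S i).ncard := by
  have hcompl : A \ (A ∩ ⋂ i ∈ s, S i) = ⋃ i ∈ s, A \ S i := by
    ext x
    by_cases hx : x ∈ A <;> simp [hx]
  have hunion : ((A \ (A ∩ ⋂ i ∈ s, S i)).ncard : ℤ) ≤ ∑ i ∈ s, ((A \ S i).ncard : ℤ) := by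
    rw [hcompl]
    exact_mod_cast s.set_ncard_biUnion_le _
  rw [Set.cast_ncard_sdiff Set.inter_subset_left A.toFinite,
    Finset.sum_congr rfl fun i hi => Set.cast_ncard_sdiff (hS i hi) A.toFinite,
    Finset.sum_sub_distrib, Finset.sum_const, nsmul_eq_mul] at hunion
  linarith

section Freeness

variable {F E : Type*} [Field F] [Field E] [Algebra F E] [Fintype F]

lemma IsEFree.of_dvd {d e : ℕ} {α : E} (hde : d ∣ e) (h : IsEFree e α) : IsEFree d α :=
  fun k hk => h k (hk.trans hde)

lemma IsGFree.of_dvd {g' g : F[X]} {α : E} (hg : g' ∣ g) (h : IsGFree g α) : IsGFree g' α :=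
  fun f hf hfg => h f hf (hfg.trans hg)

lemma isEFree_of_forall_prime {e : ℕ} {α : E}
    (h : ∀ p, p.Prime → p ∣ e → ¬ ∃ γ : E, α = γ ^ p) : IsEFree e α := by
  rintro d hd hd1 ⟨γ, rfl⟩
  obtain ⟨p, hp, hpd⟩ := Nat.exists_prime_and_dvd hd1
  exact h p hp (hpd.trans hd) ⟨γ ^ (d / p), by rw [← pow_mul, Nat.div_mul_cancel hpd]⟩

lemma isGFree_of_forall_irreducible {g : F[X]} {α : E}
    (h : ∀ π : F[X], π.Monic → Irreducible π → π ∣ g → ¬ ∃ γ : E, α = polyAction π γ) :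
    IsGFree g α := by
  rintro f hf hfg hf1 ⟨γ, rfl⟩
  obtain ⟨π, hπm, hπi, c, rfl⟩ :=
    f.exists_monic_irreducible_factor fun hu => hf1 (hf.eq_one_of_isUnit hu)
  exact h π hπm hπi ((dvd_mul_right π c).trans hfg) ⟨polyAction c γ, polyAction_mul π c γ⟩

lemma IsEFree.of_prime_mul {e N : ℕ} {α : E} (he : IsEFree e α)
    (hP : ∀ p, p.Prime → p ∣ N → ¬ p ∣ e → IsEFree (p * e) α) : IsEFree N α :=
  isEFree_of_forall_prime fun p hp hpN => by
    by_cases hpe : p ∣ e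
    · exact he p hpe hp.ne_one
    · exact hP p hp hpN hpe p (dvd_mul_right p e) hp.ne_one

lemma IsGFree.of_irreducible_mul {g f : F[X]} {α : E} (hg : IsGFree g α)
    (hH : ∀ π : F[X], π.Monic → Irreducible π → π ∣ f → ¬ π ∣ g → IsGFree (π * g) α) :
    IsGFree f α :=
  isGFree_of_forall_irreducible fun π hπm hπi hπf => by
    by_cases hπg : π ∣ g
    · exact hg π hπm hπg hπi.ne_one
    · exact hH π hπm hπi hπf hπg π hπm (dvd_mul_right π g) hπi.ne_one

end Freeness

section Counting

variable {F E : Type*} [Field F] [Field E] [Algebra F E] [Fintype F] {m : ℕ} (β : E) (j : Fin m)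

def njSet (e : Fin m → ℕ) (g : F[X]) : Set E :=
  {α : E | (∀ i : Fin m, IsEFree (e i) (α + (i : ℕ) • β)) ∧ IsGFree g (α + (j : ℕ) • β)}

lemma Nj_eq_ncard_njSet (e : Fin m → ℕ) (g : F[X]) : Nj β e g j = (njSet β j e g).ncard := rfl

variable {β j}

lemma njSet_mono {e e' : Fin m → ℕ} {g g' : F[X]} (he : ∀ i, e' i ∣ e i) (hg : g' ∣ g) :
    njSet β j e g ⊆ njSet β j e' g' :=
  fun _ hα => ⟨fun i => (hα.1 i).of_dvd (he i), hα.2.of_dvd hg⟩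

lemma mem_njSet_of_forall_prime_mul_of_forall_irreducible_mul {e N : ℕ} {g f : F[X]}
    {P : Finset ℕ} {H : Finset F[X]} (hP : ∀ p, p.Prime → p ∣ N → ¬ p ∣ e → p ∈ P)
    (hH : ∀ π : F[X], π.Monic → Irreducible π → π ∣ f → ¬ π ∣ g → π ∈ H) {α : E}
    (hα : α ∈ njSet β j (fun _ => e) g)
    (hαP : ∀ t, ∀ p ∈ P, α ∈ njSet β j (Function.update (fun _ => e) t (p * e)) g)
    (hαH : ∀ π ∈ H, α ∈ njSet β j (fun _ => e) (π * g)) :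
    α ∈ njSet β j (fun _ => N) f :=
  ⟨fun i => (hα.1 i).of_prime_mul fun p hp hpN hpe => by
      simpa using (hαP i p (hP p hp hpN hpe)).1 i,
    hα.2.of_irreducible_mul fun π hπm hπi hπf hπg => (hαH π (hH π hπm hπi hπf hπg)).2⟩

end Counting

theorem stmt_9_general (q n m : ℕ)
    (F E : Type) [Field F] [Field E] [Algebra F E] [Fintype F] [Fintype E]
    (β : E) (j : Fin m) (e : ℕ) (P : Finset ℕ) (hP : ∀ p : ℕ, p ∈ P ↔ p.Prime ∧ p ∣ q ^ n - 1 ∧ ¬ p ∣ e)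
    (g : Polynomial F) (H : Finset (Polynomial F))
    (hH : ∀ h : Polynomial F, h ∈ H ↔ h.Monic ∧ Irreducible h ∧ h ∣ X ^ n - 1 ∧ ¬ h ∣ g) :
    (Nj β (fun _ => q ^ n - 1) ((X : Polynomial F) ^ n - 1) j : ℤ) ≥
      (∑ t : Fin m, ∑ p ∈ P, (Nj β (Function.update (fun _ => e) t (p * e)) g j : ℤ)) +
      (∑ h ∈ H, (Nj β (fun _ : Fin m => e) (h * g) j : ℤ)) -
      ((m : ℤ) * P.card + H.card - 1) * (Nj β (fun _ : Fin m => e) g j : ℤ) := by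
  classical
  let S : (Fin m × ℕ) ⊕ F[X] → Set E :=
    Sum.elim (fun tp => njSet β j (Function.update (fun _ => e) tp.1 (tp.2 * e)) g)
      (fun π => njSet β j (fun _ => e) (π * g))
  let s := ((Finset.univ : Finset (Fin m)) ×ˢ P).disjSum H
  have hS : ∀ i ∈ s, S i ⊆ njSet β j (fun _ => e) g := by
    rintro (⟨t, p⟩ | π) -
    · refine njSet_mono (fun i => ?_) dvd_rfl
      rw [Function.update_apply]
      split_ifs <;> simp
    · exact njSet_mono (fun _ => dvd_rfl) (dvd_mul_left g π)
  have hfree : njSet β j (fun _ => e) g ∩ ⋂ i ∈ s, S i ⊆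
      njSet β j (fun _ => q ^ n - 1) ((X : F[X]) ^ n - 1) := by
    rintro α ⟨hα, hαS⟩
    rw [Set.mem_iInter₂] at hαS
    exact mem_njSet_of_forall_prime_mul_of_forall_irreducible_mul
      (fun p hp hpN hpe => (hP p).2 ⟨hp, hpN, hpe⟩)
      (fun π hπm hπi hπf hπg => (hH π).2 ⟨hπm, hπi, hπf, hπg⟩) hα
      (fun t p hp => hαS (.inl (t, p)) (by simpa [s] using hp))
      (fun π hπ => hαS (.inr π) (by simpa [s] using hπ))
  have hsieve := sum_ncard_sub_le_ncard_inter_biInter s hS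
  rw [Finset.sum_disjSum, Finset.sum_product, Finset.card_disjSum, Finset.card_product,
    Finset.card_univ, Fintype.card_fin] at hsieve
  have hle : ((_ ∩ ⋂ i ∈ s, S i).ncard : ℤ) ≤ _ := Nat.cast_le.2 (Set.ncard_le_ncard hfree)
  simp only [S, Sum.elim_inl, Sum.elim_inr] at hsieve
  simp only [Nj_eq_ncard_njSet]
  push_cast at hsieve
  linarith

theorem stmt_9 (q n m : ℕ) (hq : IsPrimePow q) (hn : 2 ≤ n) (hm : 2 ≤ m)
    (F E : Type) [Field F] [Field E] [Algebra F E] [Fintype F] [Fintype E]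
    (hF : Fintype.card F = q) (hE : Fintype.card E = q ^ n)
    (β : E) (hβ : β ≠ 0) (j : Fin m)
    (e : ℕ) (he : 0 < e) (hed : e ∣ q ^ n - 1)
    (P : Finset ℕ) (hP : ∀ p : ℕ, p ∈ P ↔ p.Prime ∧ p ∣ q ^ n - 1 ∧ ¬ p ∣ e)
    (g : Polynomial F) (hgm : g.Monic) (hgd : g ∣ X ^ n - 1)
    (H : Finset (Polynomial F))
    (hH : ∀ h : Polynomial F, h ∈ H ↔ h.Monic ∧ Irreducible h ∧ h ∣ X ^ n - 1 ∧ ¬ h ∣ g) :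
    (Nj β (fun _ => q ^ n - 1) ((X : Polynomial F) ^ n - 1) j : ℤ) ≥
      (∑ t : Fin m, ∑ p ∈ P, (Nj β (Function.update (fun _ => e) t (p * e)) g j : ℤ)) +
      (∑ h ∈ H, (Nj β (fun _ : Fin m => e) (h * g) j : ℤ)) -
      ((m : ℤ) * P.card + H.card - 1) * (Nj β (fun _ : Fin m => e) g j : ℤ) :=
  stmt_9_general q n m F E β j e P hP g H hH
end

section
/- Let q be a prime power. If α ∈ F_{q^2} is a primitive element, then α is normal over F_q, i.e., {α, α^q} is an F_q-basis of F_{q^2}. -/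
open Polynomial

/-!
If `α ^ q = c • α` with `c ∈ F`, then `α ^ (q - 1) = c` is a nonzero element of `F`, so
`α ^ ((q - 1) ^ 2) = c ^ (q - 1) = 1`. A primitive `α` has order `q ^ 2 - 1 > (q - 1) ^ 2`, hence
`α, α ^ q` are linearly independent, and they form a basis since `[E : F] = 2`.
-/

section

variable {F E : Type*} [Field F] [Fintype F] [Field E] [Algebra F E]

theorem pow_card_sub_one_notMem_range_algebraMap {α : E}
    (hα : (Fintype.card F - 1) ^ 2 < orderOf α) :
    α ^ (Fintype.card F - 1) ∉ Set.range (algebraMap F E) := by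
  rintro ⟨c, hc⟩
  have hα0 : α ≠ 0 := (orderOf_pos_iff.mp (by omega)).isUnit.ne_zero
  have hc0 : c ≠ 0 := by
    rintro rfl
    exact pow_ne_zero _ hα0 (by simpa using hc.symm)
  have hpow : α ^ ((Fintype.card F - 1) ^ 2) = 1 := by
    rw [sq, pow_mul, ← hc, ← map_pow, FiniteField.pow_card_sub_one_eq_one c hc0, map_one]
  have hq : 1 < Fintype.card F := Fintype.one_lt_card
  have := Nat.le_of_dvd (pow_pos (by omega) 2) (orderOf_dvd_of_pow_eq_one hpow)
  omega

theorem linearIndependent_pow_card_of_sq_lt_orderOf {α : E}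
    (hα : (Fintype.card F - 1) ^ 2 < orderOf α) :
    LinearIndependent F ![α, α ^ Fintype.card F] := by
  have hα0 : α ≠ 0 := (orderOf_pos_iff.mp (by omega)).isUnit.ne_zero
  refine (LinearIndependent.pair_iff' hα0).mpr fun c hc => ?_
  refine pow_card_sub_one_notMem_range_algebraMap hα ⟨c, mul_right_cancel₀ hα0 ?_⟩
  rw [← Algebra.smul_def, hc, ← pow_succ, Nat.sub_add_cancel Fintype.card_pos]

theorem isNormalElem_of_linearIndependent [Finite E] {n : ℕ} (hn : Module.finrank F E = n)
    {α : E} (hα : LinearIndependent F fun i : Fin n => α ^ Fintype.card F ^ (i : ℕ)) :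
    IsNormalElem F n α :=
  ⟨basisOfLinearIndependentOfCardEqFinrank' _ hα (by simp [hn]), fun _ => by simp⟩

end

theorem stmt_11_general (q : ℕ)
    (F E : Type) [Field F] [Field E] [Algebra F E] [Fintype F] [Fintype E]
    (hF : Fintype.card F = q) (hE : Fintype.card E = q ^ 2)
    (α : E) (hα : IsPrimitiveElem α) :
    IsNormalElem F 2 α := by
  have hq : 1 < q := hF ▸ Fintype.one_lt_card
  have hrank : Module.finrank F E = 2 :=
    Nat.pow_right_injective hq <| by
      simp only [← hF, ← Module.card_eq_pow_finrank (K := F) (V := E), hE]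
  have hord : (Fintype.card F - 1) ^ 2 < orderOf α := by
    rw [hα, hE, hF]
    zify [hq.le, Nat.one_le_pow 2 q (by omega)]
    nlinarith
  refine isNormalElem_of_linearIndependent hrank ?_
  convert linearIndependent_pow_card_of_sq_lt_orderOf hord using 1
  ext i
  fin_cases i <;> simp

theorem stmt_11 (q : ℕ) (hq : IsPrimePow q)
    (F E : Type) [Field F] [Field E] [Algebra F E] [Fintype F] [Fintype E]
    (hF : Fintype.card F = q) (hE : Fintype.card E = q ^ 2)
    (α : E) (hα : IsPrimitiveElem α) :
    IsNormalElem F 2 α :=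
  stmt_11_general q F E hF hE α hα
end

section
/- Let q be a prime power and n a positive integer. The number of distinct monic irreducible factors of x^n − 1 over F_q is at most n/a + b for each of the following choices of the pair (a,b): (1, 0), (2, (q−1)/2), (3, (q²+3q−4)/6), (4, (q³+3q²+5q−9)/12), and (5, (3q⁴+8q³+15q²+22q−48)/60). -/
/-!
Let `N_d` be the number of monic irreducible factors of `X ^ n - 1` of degree `d`, so that
`∑ d * N_d ≤ n`. For every `a`, `a * N ≤ ∑ d * N_d + ∑_{d < a} (a - d) * N_d`, and the degree `d`
factors are among the monic irreducible polynomials of degree `d`, whose number `I_d` is given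
by Gauss's formula `∑_{e ∣ d} e * I_e = q ^ d` (the monic irreducible factors of the squarefree
polynomial `X ^ q ^ d - X` are exactly those of degree dividing `d`). Moreover `X` is the only
monic irreducible of degree 1 not dividing `X ^ n - 1`, so `N_1 ≤ q - 1`. Inserting
`N_2 ≤ (q² - q) / 2`, `N_3 ≤ (q³ - q) / 3` and `N_4 ≤ (q⁴ - q²) / 4` gives the bounds.
-/

open Polynomial

open Finset UniqueFactorizationMonoid

theorem Finset.mul_card_le_sum_add_sum_range {ι : Type*} (s : Finset ι) (f : ι → ℕ) (a : ℕ) :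
    a * #s ≤ ∑ i ∈ s, f i + ∑ d ∈ range a, (a - d) * #{i ∈ s | f i = d} := by
  have pointwise (i : ι) : a ≤ f i + ∑ d ∈ range a, (a - d) * if f i = d then 1 else 0 := by
    simp only [mul_ite, mul_one, mul_zero, Finset.sum_ite_eq, mem_range]
    split_ifs <;> omega
  calc a * #s = ∑ _i ∈ s, a := by rw [sum_const, smul_eq_mul, mul_comm]
    _ ≤ ∑ i ∈ s, (f i + ∑ d ∈ range a, (a - d) * if f i = d then 1 else 0) :=
      sum_le_sum fun i _ => pointwise i
    _ = _ := by simp only [sum_add_distrib, card_filter, mul_sum]; rw [sum_comm]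

namespace Polynomial

section Field

variable {K : Type*} [Field K] [DecidableEq K]

noncomputable def monicFactors (P : K[X]) : Finset K[X] := (normalizedFactors P).toFinset

theorem mem_monicFactors {P h : K[X]} (hP : P ≠ 0) :
    h ∈ monicFactors P ↔ h.Monic ∧ Irreducible h ∧ h ∣ P := by
  rw [monicFactors, Multiset.mem_toFinset, Polynomial.mem_normalizedFactors_iff hP, and_left_comm]

theorem ncard_setOf_monic_irreducible_dvd {P : K[X]} (hP : P ≠ 0) :
    {h : K[X] | h.Monic ∧ Irreducible h ∧ h ∣ P}.ncard = #(monicFactors P) := by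
  rw [← Set.ncard_coe_finset]
  exact congrArg Set.ncard (Set.ext fun h => (mem_monicFactors hP).symm)

theorem card_filter_natDegree_zero_monicFactors {P : K[X]} (hP : P ≠ 0) :
    #{h ∈ monicFactors P | h.natDegree = 0} = 0 :=
  card_eq_zero.mpr <| filter_eq_empty_iff.mpr fun _ hh =>
    ((mem_monicFactors hP).mp hh).2.1.natDegree_pos.ne'

theorem natDegree_eq_sum_normalizedFactors {P : K[X]} (hP : P ≠ 0) :
    P.natDegree = ((normalizedFactors P).map natDegree).sum := by
  rw [← natDegree_multiset_prod _ (zero_notMem_normalizedFactors P)]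
  exact natDegree_eq_of_degree_eq (degree_eq_degree_of_associated (prod_normalizedFactors hP)).symm

theorem sum_natDegree_monicFactors_le {P : K[X]} (hP : P ≠ 0) :
    ∑ h ∈ monicFactors P, h.natDegree ≤ P.natDegree := by
  rw [natDegree_eq_sum_normalizedFactors hP, Finset.sum_eq_multiset_sum, monicFactors,
    Multiset.toFinset_val]
  obtain ⟨u, hu⟩ := Multiset.le_iff_exists_add.mp (Multiset.dedup_le (normalizedFactors P))
  conv_rhs => rw [hu, Multiset.map_add, Multiset.sum_add]
  exact Nat.le_add_right _ _

theorem sum_natDegree_monicFactors_of_squarefree {P : K[X]} (hP : Squarefree P) :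
    ∑ h ∈ monicFactors P, h.natDegree = P.natDegree := by
  rw [natDegree_eq_sum_normalizedFactors hP.ne_zero, Finset.sum_eq_multiset_sum, monicFactors,
    Multiset.toFinset_val, Multiset.dedup_eq_self.mpr
      ((squarefree_iff_nodup_normalizedFactors hP.ne_zero).mp hP)]

end Field

section FiniteField

variable {F : Type*} [Field F] [Finite F]

theorem squarefree_X_pow_card_pow_sub_X {d : ℕ} (hd : d ≠ 0) :
    Squarefree (X ^ Nat.card F ^ d - X : F[X]) :=
  (galois_poly_separable (ringChar F) _ <| ringChar.dvd <| by
    have := Fintype.ofFinite F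
    simp [Nat.card_eq_fintype_card, hd]).squarefree

variable [DecidableEq F]

theorem mem_monicFactors_X_pow_card_pow_sub_X {d : ℕ} (hd : d ≠ 0) {h : F[X]} :
    h ∈ monicFactors (X ^ Nat.card F ^ d - X : F[X]) ↔
      h.Monic ∧ Irreducible h ∧ h.natDegree ∣ d := by
  rw [mem_monicFactors (FiniteField.X_pow_card_pow_sub_X_ne_zero F hd Finite.one_lt_card)]
  exact and_congr_right fun _ => and_congr_right fun hi =>
    hi.natDegree_dvd_iff_dvd_X_pow_card_pow_sub_X.symm

theorem mem_filter_monicFactors_X_pow_card_pow_sub_X {d e : ℕ} (hd : d ≠ 0) (he : e ∣ d)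
    {h : F[X]} :
    h ∈ {h ∈ monicFactors (X ^ Nat.card F ^ d - X : F[X]) | h.natDegree = e} ↔
      h.Monic ∧ Irreducible h ∧ h.natDegree = e := by
  rw [mem_filter, mem_monicFactors_X_pow_card_pow_sub_X hd]
  constructor
  · rintro ⟨⟨hm, hi, -⟩, hdeg⟩
    exact ⟨hm, hi, hdeg⟩
  · rintro ⟨hm, hi, hdeg⟩
    exact ⟨⟨hm, hi, hdeg ▸ he⟩, hdeg⟩

variable (F) in
noncomputable def monicIrreducibleOfDegree (d : ℕ) : Finset F[X] :=
  {h ∈ monicFactors (X ^ Nat.card F ^ d - X : F[X]) | h.natDegree = d}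

theorem mem_monicIrreducibleOfDegree {d : ℕ} (hd : d ≠ 0) {h : F[X]} :
    h ∈ monicIrreducibleOfDegree F d ↔ h.Monic ∧ Irreducible h ∧ h.natDegree = d :=
  mem_filter_monicFactors_X_pow_card_pow_sub_X hd dvd_rfl

theorem sum_natDegree_monicIrreducibleOfDegree {d : ℕ} (hd : d ≠ 0) :
    ∑ h ∈ monicIrreducibleOfDegree F d, h.natDegree = #(monicIrreducibleOfDegree F d) * d := by
  rw [sum_congr rfl fun h hh => ((mem_monicIrreducibleOfDegree hd).mp hh).2.2, sum_const,
    smul_eq_mul]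

variable (F) in
theorem sum_divisors_mul_card_monicIrreducibleOfDegree {d : ℕ} (hd : d ≠ 0) :
    ∑ e ∈ d.divisors, e * #(monicIrreducibleOfDegree F e) = Nat.card F ^ d := by
  have fiber {e : ℕ} (he : e ∈ d.divisors) :
      {h ∈ monicFactors (X ^ Nat.card F ^ d - X : F[X]) | h.natDegree = e} =
        monicIrreducibleOfDegree F e := by
    ext h
    rw [mem_filter_monicFactors_X_pow_card_pow_sub_X hd (Nat.dvd_of_mem_divisors he),
      mem_monicIrreducibleOfDegree (Nat.pos_of_mem_divisors he).ne']
  rw [← FiniteField.X_pow_card_pow_sub_X_natDegree_eq F hd Finite.one_lt_card,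
    ← sum_natDegree_monicFactors_of_squarefree (squarefree_X_pow_card_pow_sub_X hd),
    ← sum_fiberwise_of_maps_to (t := d.divisors) (g := natDegree) fun h hh => ?_]
  · refine sum_congr rfl fun e he => ?_
    rw [fiber he, sum_natDegree_monicIrreducibleOfDegree (Nat.pos_of_mem_divisors he).ne', mul_comm]
  · obtain ⟨-, -, hdvd⟩ := (mem_monicFactors_X_pow_card_pow_sub_X hd).mp hh
    exact Nat.mem_divisors.mpr ⟨hdvd, hd⟩

theorem card_monicIrreducibleOfDegree_one :
    #(monicIrreducibleOfDegree F 1) = Nat.card F := by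
  simpa using sum_divisors_mul_card_monicIrreducibleOfDegree F one_ne_zero

theorem card_monicIrreducibleOfDegree_two :
    2 * #(monicIrreducibleOfDegree F 2) + Nat.card F = Nat.card F ^ 2 := by
  have := sum_divisors_mul_card_monicIrreducibleOfDegree F two_ne_zero
  rw [Nat.prime_two.divisors, sum_pair (by norm_num), card_monicIrreducibleOfDegree_one] at this
  omega

theorem card_monicIrreducibleOfDegree_three :
    3 * #(monicIrreducibleOfDegree F 3) + Nat.card F = Nat.card F ^ 3 := by
  have := sum_divisors_mul_card_monicIrreducibleOfDegree F three_ne_zero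
  rw [Nat.prime_three.divisors, sum_pair (by norm_num), card_monicIrreducibleOfDegree_one] at this
  omega

theorem card_monicIrreducibleOfDegree_four :
    4 * #(monicIrreducibleOfDegree F 4) + Nat.card F ^ 2 = Nat.card F ^ 4 := by
  have := sum_divisors_mul_card_monicIrreducibleOfDegree F four_ne_zero
  rw [show Nat.divisors 4 = {1, 2, 4} from rfl, sum_insert (by decide), sum_pair (by norm_num),
    card_monicIrreducibleOfDegree_one] at this
  linarith [card_monicIrreducibleOfDegree_two (F := F)]

theorem filter_natDegree_monicFactors_subset {P : F[X]} (hP : P ≠ 0) {d : ℕ} (hd : d ≠ 0) :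
    {h ∈ monicFactors P | h.natDegree = d} ⊆ monicIrreducibleOfDegree F d := by
  intro h hh
  obtain ⟨hPh, hdeg⟩ := mem_filter.mp hh
  obtain ⟨hm, hi, -⟩ := (mem_monicFactors hP).mp hPh
  exact (mem_monicIrreducibleOfDegree hd).mpr ⟨hm, hi, hdeg⟩

theorem card_filter_natDegree_one_monicFactors_lt {P : F[X]} (hP : P ≠ 0) (hP0 : P.coeff 0 ≠ 0) :
    #{h ∈ monicFactors P | h.natDegree = 1} < Nat.card F := by
  have hX : X ∈ monicIrreducibleOfDegree F 1 :=
    (mem_monicIrreducibleOfDegree one_ne_zero).mpr ⟨monic_X, irreducible_X, natDegree_X⟩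
  have hXP : X ∉ {h ∈ monicFactors P | h.natDegree = 1} := fun hXP =>
    hP0 (X_dvd_iff.mp ((mem_monicFactors hP).mp (mem_filter.mp hXP).1).2.2)
  rw [← card_monicIrreducibleOfDegree_one]
  exact card_lt_card ((ssubset_iff_of_subset
    (filter_natDegree_monicFactors_subset hP one_ne_zero)).mpr ⟨X, hX, hXP⟩)

end FiniteField

end Polynomial

theorem stmt_14_general (q n : ℕ) (hn : 0 < n)
    (F : Type) [Field F] [Fintype F] (hF : Fintype.card F = q)
    (N : ℕ)
    (hN : N = Set.ncard {h : Polynomial F | h.Monic ∧ Irreducible h ∧ h ∣ X ^ n - 1}) :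
    (N : ℝ) ≤ (n : ℝ) / 1 + 0 ∧
    (N : ℝ) ≤ (n : ℝ) / 2 + ((q : ℝ) - 1) / 2 ∧
    (N : ℝ) ≤ (n : ℝ) / 3 + ((q : ℝ) ^ 2 + 3 * q - 4) / 6 ∧
    (N : ℝ) ≤ (n : ℝ) / 4 + ((q : ℝ) ^ 3 + 3 * (q : ℝ) ^ 2 + 5 * q - 9) / 12 ∧
    (N : ℝ) ≤ (n : ℝ) / 5 +
      (3 * (q : ℝ) ^ 4 + 8 * (q : ℝ) ^ 3 + 15 * (q : ℝ) ^ 2 + 22 * q - 48) / 60 := by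
  classical
  have hP : (X ^ n - 1 : F[X]) ≠ 0 := X_pow_sub_C_ne_zero hn 1
  rw [ncard_setOf_monic_irreducible_dvd hP] at hN
  subst hN
  set S := monicFactors (X ^ n - 1 : F[X])
  obtain rfl : Nat.card F = q := Nat.card_eq_fintype_card.trans hF
  have hdeg : ∑ h ∈ S, h.natDegree ≤ n :=
    (sum_natDegree_monicFactors_le hP).trans (natDegree_X_pow_sub_C (r := (1 : F))).le
  have hM0 : #{h ∈ S | h.natDegree = 0} = 0 := card_filter_natDegree_zero_monicFactors hP
  have hM1 : #{h ∈ S | h.natDegree = 1} + 1 ≤ Nat.card F :=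
    card_filter_natDegree_one_monicFactors_lt hP (by simp [hn.ne])
  have hM2 := card_le_card (filter_natDegree_monicFactors_subset hP two_ne_zero)
  have hM3 := card_le_card (filter_natDegree_monicFactors_subset hP three_ne_zero)
  have hM4 := card_le_card (filter_natDegree_monicFactors_subset hP four_ne_zero)
  have hI2 := card_monicIrreducibleOfDegree_two (F := F)
  have hI3 := card_monicIrreducibleOfDegree_three (F := F)
  have hI4 := card_monicIrreducibleOfDegree_four (F := F)
  have count (a : ℕ) := mul_card_le_sum_add_sum_range S natDegree a
  have k1 := count 1
  have k2 := count 2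
  have k3 := count 3
  have k4 := count 4
  have k5 := count 5
  simp only [sum_range_succ, sum_range_zero, hM0] at k1 k2 k3 k4 k5
  norm_num at k1 k2 k3 k4 k5
  rify at hdeg hM1 hM2 hM3 hM4 hI2 hI3 hI4 k1 k2 k3 k4 k5
  exact ⟨by linarith, by linarith, by linarith, by linarith, by linarith⟩

theorem stmt_14 (q n : ℕ) (hq : IsPrimePow q) (hn : 0 < n)
    (F : Type) [Field F] [Fintype F] (hF : Fintype.card F = q)
    (N : ℕ)
    (hN : N = Set.ncard {h : Polynomial F | h.Monic ∧ Irreducible h ∧ h ∣ X ^ n - 1}) :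
    (N : ℝ) ≤ (n : ℝ) / 1 + 0 ∧
    (N : ℝ) ≤ (n : ℝ) / 2 + ((q : ℝ) - 1) / 2 ∧
    (N : ℝ) ≤ (n : ℝ) / 3 + ((q : ℝ) ^ 2 + 3 * q - 4) / 6 ∧
    (N : ℝ) ≤ (n : ℝ) / 4 + ((q : ℝ) ^ 3 + 3 * (q : ℝ) ^ 2 + 5 * q - 9) / 12 ∧
    (N : ℝ) ≤ (n : ℝ) / 5 +
      (3 * (q : ℝ) ^ 4 + 8 * (q : ℝ) ^ 3 + 15 * (q : ℝ) ^ 2 + 22 * q - 48) / 60 :=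
  stmt_14_general q n hn F hF N hN
end
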